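/- arXiv:2101.08075 — 3 statements merged into one kernel-verified Lean document; each statement's English description precedes it below -/
import Mathlib

section
/- Let M be a locally compact, σ-compact, connected metric space and μ a Borel measure on M that is positive on nonempty open sets and finite on compact sets. Let U be a proper open subset of M and let Q and K be disjoint compact subsets of the boundary ∂U. Then for every ε > 0 there exists δ > 0 such that, writing V_δ = {x ∈ M : dist(x, K) < δ}, the set V_δ is disjoint from Q and for every p ∈ Q and every r > 0 one has μ(B(p,r) ∩ U ∩ V_δ) < ε · μ(B(p,r) ∩ U). -/
/-! Choose `δ₁ > 0` such that the `δ₁`-thickenings of `Q` and `K` are disjoint. Balls of radius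
`r ≤ δ₁` around points of `Q` then never meet `V_δ` for `δ ≤ δ₁`, while for `r ≥ δ₁` the measure
`μ (B(p, r) ∩ U)` is bounded below, uniformly in `p ∈ Q`, by some `ρ > 0` (compactness of `Q`).
Since `K ⊆ ∂U` is compact, the sets `V_δ ∩ U` decrease to `K ∩ U = ∅` and have finite measure for
small `δ` (local compactness), so their measure tends to `0` and eventually drops below `ε ρ`. -/

open Metric MeasureTheory Set Filter Topology

section

variable {X : Type*} [PseudoMetricSpace X] [MeasurableSpace X] (μ : Measure X) {U : Set X}

lemma measure_ball_inter_pos_of_mem_closure [μ.IsOpenPosMeasure] (hU : IsOpen U) {p : X}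
    (hp : p ∈ closure U) {r : ℝ} (hr : 0 < r) : 0 < μ (ball p r ∩ U) :=
  (isOpen_ball.inter hU).measure_pos μ
    (_root_.mem_closure_iff.1 hp (ball p r) isOpen_ball (mem_ball_self hr))

lemma IsCompact.exists_pos_forall_le_measure_ball_inter [μ.IsOpenPosMeasure] {Q : Set X}
    (hQ : IsCompact Q) (hU : IsOpen U) (hQU : Q ⊆ closure U) {δ : ℝ} (hδ : 0 < δ) :
    ∃ ρ > 0, ∀ p ∈ Q, ρ ≤ μ (ball p δ ∩ U) := by
  obtain ⟨t, htQ, hQt⟩ := hQ.elim_nhds_subcover (fun q => ball q (δ / 2))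
    (fun q _ => ball_mem_nhds q (half_pos hδ))
  refine ⟨t.inf fun q => μ (ball q (δ / 2) ∩ U), ?_, fun p hp => ?_⟩
  · refine (Finset.lt_inf_iff ENNReal.zero_lt_top).2 fun q hq => ?_
    exact measure_ball_inter_pos_of_mem_closure μ hU (hQU (htQ q hq)) (half_pos hδ)
  · obtain ⟨q, hq, hpq⟩ := mem_iUnion₂.1 (hQt hp)
    have hball : ball q (δ / 2) ⊆ ball p δ := by
      refine ball_subset_ball' ?_
      linarith [mem_ball'.1 hpq]
    exact (Finset.inf_le hq).trans (measure_mono (inter_subset_inter_left U hball))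

lemma IsCompact.tendsto_measure_thickening_inter_of_disjoint [OpensMeasurableSpace X]
    [LocallyCompactSpace X] [IsFiniteMeasureOnCompacts μ] {K : Set X} (hK : IsCompact K)
    (hU : IsOpen U) (hKU : Disjoint K U) :
    Tendsto (fun δ => μ (thickening δ K ∩ U)) (𝓝[>] 0) (𝓝 0) := by
  obtain ⟨R, hR, hRK⟩ := hK.exists_isCompact_cthickening
  have hfin : (μ.restrict U) (thickening R K) ≠ ⊤ :=
    ((measure_mono (thickening_subset_cthickening R K)).trans_lt
      (hRK.measure_lt_top (μ := μ.restrict U))).ne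
  have h := tendsto_measure_thickening ⟨R, hR, hfin⟩
  simp only [Measure.restrict_apply' hU.measurableSet, (hKU.closure_left hU).inter_eq,
    measure_empty] at h
  exact h

end

theorem stmt0_general {M : Type*} [MetricSpace M] [LocallyCompactSpace M]
    [MeasurableSpace M] [BorelSpace M] (μ : Measure M)
    (hpos : ∀ O : Set M, IsOpen O → O.Nonempty → 0 < μ O)
    (hfin : ∀ K : Set M, IsCompact K → μ K < ⊤)
    (U : Set M) (hU : IsOpen U)
    (Q K : Set M) (hQ : IsCompact Q) (hK : IsCompact K)
    (hQb : Q ⊆ frontier U) (hKb : K ⊆ frontier U) (hdisj : Disjoint Q K)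
    (ε : ℝ) (hε : 0 < ε) :
    ∃ δ > 0, Disjoint {x : M | EMetric.infEdist x K < ENNReal.ofReal δ} Q ∧
      ∀ p ∈ Q, ∀ r > 0,
        μ (ball p r ∩ U ∩ {x : M | EMetric.infEdist x K < ENNReal.ofReal δ}) <
          ENNReal.ofReal ε * μ (ball p r ∩ U) := by
  have : μ.IsOpenPosMeasure := ⟨fun O hO hne => (hpos O hO hne).ne'⟩
  have : IsFiniteMeasureOnCompacts μ := ⟨hfin⟩
  have hQU : Q ⊆ closure U := fun p hp => (hQb hp).1
  have hKU : Disjoint K U := (disjoint_frontier_iff_isOpen.2 hU).mono_left hKb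
  obtain ⟨δ₁, hδ₁, hsep⟩ := hdisj.exists_thickenings hQ hK.isClosed
  obtain ⟨ρ, hρ, hρle⟩ := hQ.exists_pos_forall_le_measure_ball_inter μ hU hQU hδ₁
  have hερ : 0 < ENNReal.ofReal ε * ρ := ENNReal.mul_pos (ENNReal.ofReal_pos.2 hε).ne' hρ.ne'
  obtain ⟨δ, ⟨hδ, hδδ₁⟩, hsmall⟩ :=
    (Eventually.and (Ioo_mem_nhdsGT hδ₁) ((hK.tendsto_measure_thickening_inter_of_disjoint
      μ hU hKU).eventually (gt_mem_nhds hερ))).exists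
  have hsepδ : Disjoint (thickening δ₁ Q) (thickening δ K) :=
    hsep.mono_right (thickening_mono hδδ₁.le K)
  refine ⟨δ, hδ, (hsepδ.mono_left (self_subset_thickening hδ₁ Q)).symm, fun p hp r hr => ?_⟩
  change μ (ball p r ∩ U ∩ thickening δ K) < _
  rcases le_or_gt r δ₁ with hrδ₁ | hδ₁r
  · have hempty : ball p r ∩ U ∩ thickening δ K = ∅ :=
      (hsepδ.mono_left (inter_subset_left.trans
        ((ball_subset_ball hrδ₁).trans (ball_subset_thickening hp δ₁)))).inter_eq
    rw [hempty, measure_empty]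
    exact ENNReal.mul_pos (ENNReal.ofReal_pos.2 hε).ne'
      (measure_ball_inter_pos_of_mem_closure μ hU (hQU hp) hr).ne'
  · calc μ (ball p r ∩ U ∩ thickening δ K)
        ≤ μ (thickening δ K ∩ U) := measure_mono fun x ⟨⟨_, hxU⟩, hxK⟩ => ⟨hxK, hxU⟩
      _ < ENNReal.ofReal ε * ρ := hsmall
      _ ≤ ENNReal.ofReal ε * μ (ball p r ∩ U) := by
        gcongr
        exact (hρle p hp).trans (by gcongr)

theorem stmt0 {M : Type*} [MetricSpace M] [LocallyCompactSpace M] [SigmaCompactSpace M]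
    [ConnectedSpace M] [MeasurableSpace M] [BorelSpace M] (μ : Measure M)
    (hpos : ∀ O : Set M, IsOpen O → O.Nonempty → 0 < μ O)
    (hfin : ∀ K : Set M, IsCompact K → μ K < ⊤)
    (U : Set M) (hU : IsOpen U) (hUproper : U ≠ univ)
    (Q K : Set M) (hQ : IsCompact Q) (hK : IsCompact K)
    (hQb : Q ⊆ frontier U) (hKb : K ⊆ frontier U) (hdisj : Disjoint Q K)
    (ε : ℝ) (hε : 0 < ε) :
    ∃ δ > 0, Disjoint {x : M | EMetric.infEdist x K < ENNReal.ofReal δ} Q ∧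
      ∀ p ∈ Q, ∀ r > 0,
        μ (ball p r ∩ U ∩ {x : M | EMetric.infEdist x K < ENNReal.ofReal δ}) <
          ENNReal.ofReal ε * μ (ball p r ∩ U) :=
  stmt0_general μ hpos hfin U hU Q K hQ hK hQb hKb hdisj ε hε
end

section
/- Let X be a locally compact Hausdorff space, ν a regular σ-finite Borel measure on X, S ⊆ X a closed set, and φ : X → ℝ a Borel measurable function whose restriction to S is continuous. Then there exists a sequence (Q_n)_{n≥1} of pairwise disjoint compact subsets of X \ S such that ν(X \ (S ∪ ⋃_n Q_n)) = 0 and for every n the restriction of φ to S ∪ Q_1 ∪ ⋯ ∪ Q_n is continuous. -/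
open Set MeasureTheory
open scoped ENNReal

/-!
Lusin's theorem, in the form "a measurable map into a second countable space is continuous on a
compact subset of any finite-measure set up to error `ε`", comes from inner regularity: for each
basic open set `U`, approximate `A ∩ f⁻¹ U` and `A \ f⁻¹ U` from inside by compact sets; on the
intersection `K` over all `U` of these compact pieces, each `f⁻¹ U` is relatively open in `K`.

The sequence `Q` is then built recursively: `Q n` is a Lusin compact for the part of the `n`-th
spanning set of `ν` not yet covered by the closed set `S ∪ Q 0 ∪ ⋯ ∪ Q (n - 1)`, with error `1 / n`.
Since `Q n` is disjoint from that closed set, continuity is preserved by pasting along closed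
sets, and the uncovered part of the `m`-th spanning set has measure at most `1 / n` for all `n ≥ m`.
-/

section

variable {X Y : Type*} [TopologicalSpace X] [T2Space X] [MeasurableSpace X]
  [OpensMeasurableSpace X] {ν : Measure X} [ν.InnerRegularCompactLTTop]

theorem MeasurableSet.exists_isCompact_sdiff_lt_isOpen_preimage_val {A B : Set X}
    (hA : MeasurableSet A) (hνA : ν A ≠ ∞) (hB : MeasurableSet B) {ε : ℝ≥0∞} (hε : ε ≠ 0) :
    ∃ K ⊆ A, IsCompact K ∧ ν (A \ K) < ε ∧ IsOpen ((↑) ⁻¹' B : Set K) := by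
  have hε2 : ε / 2 ≠ 0 := by simpa using hε
  obtain ⟨K₁, hK₁A, hK₁, hνK₁⟩ := (hA.inter hB).exists_isCompact_sdiff_lt
    (measure_ne_top_of_subset inter_subset_left hνA) hε2
  obtain ⟨K₂, hK₂A, hK₂, hνK₂⟩ := (hA.diff hB).exists_isCompact_sdiff_lt
    (measure_ne_top_of_subset sdiff_subset hνA) hε2
  refine ⟨K₁ ∪ K₂, union_subset (hK₁A.trans inter_subset_left) (hK₂A.trans sdiff_subset),
    hK₁.union hK₂, ?_, ?_⟩
  · calc ν (A \ (K₁ ∪ K₂)) ≤ ν ((A ∩ B) \ K₁ ∪ (A \ B) \ K₂) := by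
          gcongr
          intro x ⟨hxA, hxK⟩
          by_cases hxB : x ∈ B
          · exact Or.inl ⟨⟨hxA, hxB⟩, fun h => hxK (Or.inl h)⟩
          · exact Or.inr ⟨⟨hxA, hxB⟩, fun h => hxK (Or.inr h)⟩
      _ ≤ ν ((A ∩ B) \ K₁) + ν ((A \ B) \ K₂) := measure_union_le _ _
      _ < ε / 2 + ε / 2 := ENNReal.add_lt_add hνK₁ hνK₂
      _ = ε := ENNReal.add_halves ε
  · -- inside `K₁ ∪ K₂`, the set `B` is the complement of the compact set `K₂`
    have : ((↑) ⁻¹' B : Set ↥(K₁ ∪ K₂)) = (↑) ⁻¹' K₂ᶜ := by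
      rw [Subtype.preimage_coe_eq_preimage_coe_iff]
      ext x
      have := @hK₁A x
      have := @hK₂A x
      simp only [mem_inter_iff, mem_union, mem_sdiff, mem_compl_iff] at *
      tauto
    rw [this]
    exact hK₂.isClosed.isOpen_compl.preimage continuous_subtype_val

theorem Measurable.exists_isCompact_sdiff_lt_continuousOn [TopologicalSpace Y]
    [SecondCountableTopology Y] [MeasurableSpace Y] [OpensMeasurableSpace Y] {f : X → Y}
    (hf : Measurable f) {A : Set X} (hA : MeasurableSet A) (hνA : ν A ≠ ∞) {ε : ℝ≥0∞}
    (hε : ε ≠ 0) : ∃ K ⊆ A, IsCompact K ∧ ν (A \ K) < ε ∧ ContinuousOn f K := by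
  -- `∅` is added only so that the intersection below is over an inhabited index type
  set 𝓑 := insert ∅ (TopologicalSpace.countableBasis Y)
  have : Countable 𝓑 := ((TopologicalSpace.countable_countableBasis Y).insert ∅).to_subtype
  have h𝓑 : ∀ U ∈ 𝓑, IsOpen U := by
    rintro U (rfl | hU)
    exacts [isOpen_empty, TopologicalSpace.isOpen_of_mem_countableBasis hU]
  obtain ⟨δ, hδ, hδε⟩ := ENNReal.exists_pos_sum_of_countable hε 𝓑
  choose K hKA hK hνK hKopen using fun U : 𝓑 =>
    hA.exists_isCompact_sdiff_lt_isOpen_preimage_val hνA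
      (hf (h𝓑 U U.2).measurableSet) (ENNReal.coe_ne_zero.2 (hδ U).ne')
  have hsub : ∀ U, ⋂ V, K V ⊆ K U := iInter_subset K
  let U₀ : 𝓑 := ⟨∅, mem_insert _ _⟩
  refine ⟨⋂ U, K U, (hsub U₀).trans (hKA U₀),
    (hK U₀).of_isClosed_subset (isClosed_iInter fun U => (hK U).isClosed) (hsub U₀), ?_, ?_⟩
  · calc ν (A \ ⋂ U, K U) = ν (⋃ U, A \ K U) := by rw [sdiff_iInter]
      _ ≤ ∑' U, ν (A \ K U) := measure_iUnion_le _
      _ ≤ ∑' U, (δ U : ℝ≥0∞) := ENNReal.tsum_le_tsum fun U => (hνK U).le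
      _ < ε := hδε
  · rw [continuousOn_iff_continuous_domRestrict,
      (TopologicalSpace.isBasis_countableBasis Y).continuous_iff]
    intro U hU
    exact (hKopen ⟨U, mem_insert_of_mem _ hU⟩).preimage (continuous_inclusion (hsub _))

variable [TopologicalSpace Y] [SecondCountableTopology Y] [MeasurableSpace Y]
  [OpensMeasurableSpace Y] {f : X → Y} {S : Set X}

theorem ContinuousOn.exists_seq_isCompact_continuousOn_union (hfS : ContinuousOn f S)
    (hS : IsClosed S) (hf : Measurable f) {B : ℕ → Set X} (hB : ∀ n, MeasurableSet (B n))
    (hνB : ∀ n, ν (B n) ≠ ∞) {ε : ℕ → ℝ≥0∞} (hε : ∀ n, ε n ≠ 0) :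
    ∃ Q : ℕ → Set X, (∀ n, IsCompact (Q n)) ∧
      (∀ n, Q n ⊆ B n \ (S ∪ ⋃ i < n, Q i)) ∧
      (∀ n, ν ((B n \ (S ∪ ⋃ i < n, Q i)) \ Q n) < ε n) ∧
      ∀ n, ContinuousOn f (S ∪ ⋃ i < n, Q i) := by
  choose q hqB hq hνq hfq using fun n (F : {F : Set X // IsClosed F ∧ ContinuousOn f F}) =>
    hf.exists_isCompact_sdiff_lt_continuousOn ((hB n).diff F.2.1.measurableSet)
      (measure_ne_top_of_subset sdiff_subset (hνB n)) (hε n)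
  let F : ℕ → {F : Set X // IsClosed F ∧ ContinuousOn f F} := fun n =>
    Nat.rec ⟨S, hS, hfS⟩ (fun n F => ⟨F.1 ∪ q n F, F.2.1.union (hq n F).isClosed,
      F.2.2.union_of_isClosed (hfq n F) F.2.1 (hq n F).isClosed⟩) n
  have hF : ∀ n, (F n).1 = S ∪ ⋃ i < n, q i (F i) := by
    intro n
    induction n with
    | zero => simp [F]
    | succ n ih => rw [biUnion_lt_succ, ← union_assoc, ← ih]
  refine ⟨fun n => q n (F n), fun n => hq n _, fun n => ?_, fun n => ?_, fun n => ?_⟩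
  · rw [← hF]; exact hqB n _
  · rw [← hF]; exact hνq n _
  · rw [← hF]; exact (F n).2.2

theorem ContinuousOn.exists_pairwise_disjoint_isCompact_measure_compl_eq_zero [SigmaFinite ν]
    (hfS : ContinuousOn f S) (hS : IsClosed S) (hf : Measurable f) :
    ∃ Q : ℕ → Set X, Pairwise (Function.onFun Disjoint Q) ∧ (∀ n, IsCompact (Q n)) ∧
      (∀ n, Q n ⊆ Sᶜ) ∧ ν (S ∪ ⋃ n, Q n)ᶜ = 0 ∧ ∀ n, ContinuousOn f (S ∪ ⋃ i ≤ n, Q i) := by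
  obtain ⟨Q, hQ, hQB, hνQ, hfQ⟩ := hfS.exists_seq_isCompact_continuousOn_union hS hf
    (measurableSet_spanningSets ν) (fun n => (measure_spanningSets_lt_top ν n).ne)
    (ε := fun n => (n : ℝ≥0∞)⁻¹) (fun n => ENNReal.inv_ne_zero.2 (ENNReal.natCast_ne_top n))
  refine ⟨Q, (pairwise_disjoint_on Q).2 fun m n hmn => ?_, hQ,
    fun n x hx hxS => (hQB n hx).2 (Or.inl hxS), ?_, fun n => ?_⟩
  · exact disjoint_left.2 fun x hxm hxn =>
      (hQB n hxn).2 (Or.inr (mem_biUnion hmn hxm))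
  · have hleftover : ∀ m n, m ≤ n → (S ∪ ⋃ n, Q n)ᶜ ∩ spanningSets ν m ⊆
        (spanningSets ν n \ (S ∪ ⋃ i < n, Q i)) \ Q n := by
      intro m n hmn x ⟨hx, hxm⟩
      simp only [mem_compl_iff, mem_union, mem_iUnion, not_or, not_exists] at hx
      refine ⟨⟨monotone_spanningSets ν hmn hxm, ?_⟩, hx.2 n⟩
      simp only [mem_union, mem_iUnion, not_or, not_exists]
      exact ⟨hx.1, fun i _ => hx.2 i⟩
    rw [← inter_univ (S ∪ ⋃ n, Q n)ᶜ, ← iUnion_spanningSets ν, inter_iUnion]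
    refine measure_iUnion_null fun m => nonpos_iff_eq_zero.1 ?_
    refine ge_of_tendsto ENNReal.tendsto_inv_nat_nhds_zero
      (Filter.eventually_atTop.2 ⟨m, fun n hmn => ?_⟩)
    exact (measure_mono (hleftover m n hmn)).trans (hνQ n).le
  · simpa only [Nat.lt_succ_iff] using hfQ (n + 1)

end

theorem stmt5_general {X : Type*} [TopologicalSpace X] [T2Space X]
    [MeasurableSpace X] [BorelSpace X]
    (ν : Measure X) [ν.Regular] [SigmaFinite ν]
    (S : Set X) (hS : IsClosed S) (φ : X → ℝ) (hφ : Measurable φ)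
    (hφS : ContinuousOn φ S) :
    ∃ Q : ℕ → Set X, Pairwise (Function.onFun Disjoint Q) ∧
      (∀ n, IsCompact (Q n)) ∧ (∀ n, Q n ⊆ Sᶜ) ∧
      ν (univ \ (S ∪ ⋃ n, Q n)) = 0 ∧
      ∀ n, ContinuousOn φ (S ∪ ⋃ i ≤ n, Q i) := by
  simpa only [compl_eq_univ_sdiff] using
    hφS.exists_pairwise_disjoint_isCompact_measure_compl_eq_zero (ν := ν) hS hφ

theorem stmt5 {X : Type*} [TopologicalSpace X] [T2Space X] [LocallyCompactSpace X]
    [MeasurableSpace X] [BorelSpace X]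
    (ν : Measure X) [ν.Regular] [SigmaFinite ν]
    (S : Set X) (hS : IsClosed S) (φ : X → ℝ) (hφ : Measurable φ)
    (hφS : ContinuousOn φ S) :
    ∃ Q : ℕ → Set X, Pairwise (Function.onFun Disjoint Q) ∧
      (∀ n, IsCompact (Q n)) ∧ (∀ n, Q n ⊆ Sᶜ) ∧
      ν (univ \ (S ∪ ⋃ n, Q n)) = 0 ∧
      ∀ n, ContinuousOn φ (S ∪ ⋃ i ≤ n, Q i) :=
  stmt5_general ν S hS φ hφ hφS
end

section
/- Let U be a connected open subset of ℝ^n with nonempty boundary, μ an absolutely continuous (with respect to Lebesgue measure) Borel measure on ℝ^n positive on open sets and finite on compacts, and C a compact connected subset of U with μ(C) = 0. Then for each ε > 0 there is a connected open neighborhood R of C with R ⊆ U such that μ(R ∩ B(p,r)) < ε · μ(U ∩ B(p,r)) for every p ∈ ∂U and every r > 0. -/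
open Metric MeasureTheory Set

/-!
Take `R` a thickening of `C` so thin that `μ R < ε m` (outer regularity, as `μ C = 0`), where
`m > 0` bounds from below the mass of every ball of radius `d/4` centred within `3d/4` of `C`,
and `thickening d C ⊆ U`. A boundary point `p` is at distance `≥ d` from `C`, so if `ball p r`
meets `R ⊆ thickening (d/2) C` at all, then moving `3d/4` from a nearby point of `C` towards `p`
gives a ball of radius `d/4` inside `U ∩ ball p r`, of mass `≥ m`. If it misses `R`, the left
side is `0` while `U ∩ ball p r` is a nonempty open set.
-/

theorem IsCompact.exists_pos_le_measure_ball {X : Type*} [PseudoMetricSpace X]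
    [MeasurableSpace X] (μ : Measure X) [μ.IsOpenPosMeasure] {K : Set X} (hK : IsCompact K)
    {ρ : ℝ} (hρ : 0 < ρ) : ∃ m > 0, ∀ z ∈ K, m ≤ μ (ball z ρ) := by
  obtain ⟨t, -, hKt⟩ := hK.elim_nhds_subcover (fun x => ball x (ρ / 2))
    (fun x _ => ball_mem_nhds x (half_pos hρ))
  refine ⟨t.inf fun x => μ (ball x (ρ / 2)),
    (Finset.lt_inf_iff ENNReal.zero_lt_top).2 fun x _ => measure_ball_pos μ x (half_pos hρ),
    fun z hz => ?_⟩
  obtain ⟨x, hxt, hzx⟩ := mem_iUnion₂.1 (hKt hz)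
  refine (Finset.inf_le hxt).trans (measure_mono (ball_subset_ball' ?_))
  rw [mem_ball'] at hzx
  linarith

theorem measure_inter_ball_pos_of_mem_closure {X : Type*} [PseudoMetricSpace X]
    [MeasurableSpace X] (μ : Measure X) [μ.IsOpenPosMeasure] {U : Set X} (hU : IsOpen U)
    {p : X} (hp : p ∈ closure U) {r : ℝ} (hr : 0 < r) : 0 < μ (U ∩ ball p r) :=
  (hU.inter isOpen_ball).measure_pos μ
    ((mem_closure_iff.1 hp _ isOpen_ball (mem_ball_self hr)).mono (inter_comm _ _).subset)

section NormedSpace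

variable {E : Type*} [SeminormedAddCommGroup E] [NormedSpace ℝ E]

theorem IsPreconnected.thickening {s : Set E} (hs : IsPreconnected s) (δ : ℝ) :
    IsPreconnected (thickening δ s) := by
  rw [← add_ball_zero, ← image2_add, ← image_prod]
  exact (hs.prod (convex_ball 0 δ).isPreconnected).image _ continuous_add.continuousOn

theorem IsConnected.thickening {s : Set E} (hs : IsConnected s) {δ : ℝ} (hδ : 0 < δ) :
    IsConnected (thickening δ s) :=
  ⟨hs.nonempty.mono (self_subset_thickening hδ s), hs.isPreconnected.thickening δ⟩

theorem exists_ball_subset_ball_inter_ball {c p : E} {d r : ℝ} (hd : 0 < d)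
    (hdc : d ≤ dist c p) (hr : dist c p < r + d / 2) :
    ∃ z, dist z c = 3 * d / 4 ∧ ball z (d / 4) ⊆ ball c d ∩ ball p r := by
  have hcp : 0 < dist c p := hd.trans_le hdc
  obtain ⟨z, hcz, hzp⟩ := exists_dist_eq c p (a := 1 - 3 * d / 4 / dist c p)
    (b := 3 * d / 4 / dist c p) (by rw [sub_nonneg, div_le_one hcp]; linarith) (by positivity)
    (by ring)
  rw [div_mul_cancel₀ _ hcp.ne'] at hcz
  rw [sub_mul, one_mul, div_mul_cancel₀ _ hcp.ne'] at hzp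
  rw [dist_comm] at hcz
  refine ⟨z, hcz, subset_inter (ball_subset_ball' ?_) (ball_subset_ball' ?_)⟩ <;> linarith

theorem exists_ball_subset_thickening_inter_ball {C : Set E} {p y : E} {d r : ℝ} (hd : 0 < d)
    (hp : p ∉ thickening d C) (hy : y ∈ thickening (d / 2) C) (hyp : y ∈ ball p r) :
    ∃ z ∈ cthickening (3 * d / 4) C, ball z (d / 4) ⊆ thickening d C ∩ ball p r := by
  obtain ⟨c, hc, hyc⟩ := mem_thickening_iff.1 hy
  have hdc : d ≤ dist c p := by
    rw [dist_comm]
    exact not_lt.1 fun h => hp (mem_thickening_iff.2 ⟨c, hc, h⟩)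
  have hr : dist c p < r + d / 2 := by
    rw [mem_ball] at hyp
    linarith [dist_triangle c y p, dist_comm c y]
  obtain ⟨z, hzc, hz⟩ := exists_ball_subset_ball_inter_ball hd hdc hr
  exact ⟨z, mem_cthickening_of_dist_le z c _ C hc hzc.le,
    hz.trans (inter_subset_inter_left _ (ball_subset_thickening hc d))⟩

end NormedSpace

theorem stmt12_general {n : ℕ} (μ : Measure (EuclideanSpace ℝ (Fin n)))
    (hpos : ∀ O : Set (EuclideanSpace ℝ (Fin n)), IsOpen O → O.Nonempty → 0 < μ O)
    (hfin : ∀ K : Set (EuclideanSpace ℝ (Fin n)), IsCompact K → μ K < ⊤)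
    (U : Set (EuclideanSpace ℝ (Fin n))) (hU : IsOpen U)
    (C : Set (EuclideanSpace ℝ (Fin n))) (hC : IsCompact C) (hCconn : IsConnected C)
    (hCU : C ⊆ U) (hC0 : μ C = 0) (ε : ℝ) (hε : 0 < ε) :
    ∃ R : Set (EuclideanSpace ℝ (Fin n)), IsOpen R ∧ IsConnected R ∧ C ⊆ R ∧ R ⊆ U ∧
      ∀ p ∈ frontier U, ∀ r > (0 : ℝ),
        μ (R ∩ ball p r) < ENNReal.ofReal ε * μ (U ∩ ball p r) := by
  have : IsFiniteMeasureOnCompacts μ := ⟨hfin⟩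
  have : μ.IsOpenPosMeasure := ⟨fun O hO hne => (hpos O hO hne).ne'⟩
  have hε' : ENNReal.ofReal ε ≠ 0 := (ENNReal.ofReal_pos.2 hε).ne'
  obtain ⟨d, hd, hdU⟩ := hC.exists_thickening_subset_open hU hCU
  obtain ⟨m, hm, hmμ⟩ :=
    hC.cthickening.exists_pos_le_measure_ball μ (by positivity : 0 < d / 4)
  obtain ⟨V, hCV, hV, hVμ⟩ :=
    C.exists_isOpen_lt_of_lt _ (hC0 ▸ ENNReal.mul_pos hε' hm.ne' : μ C < ENNReal.ofReal ε * m)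
  obtain ⟨δ, hδ, hδV⟩ := hC.exists_thickening_subset_open (hV.inter isOpen_thickening)
    (subset_inter hCV (self_subset_thickening (half_pos hd) C))
  refine ⟨thickening δ C, isOpen_thickening, hCconn.thickening hδ, self_subset_thickening hδ C,
    hδV.trans (inter_subset_right.trans ((thickening_mono (by linarith) C).trans hdU)), ?_⟩
  intro p hp r hr
  rw [hU.frontier_eq] at hp
  rcases (thickening δ C ∩ ball p r).eq_empty_or_nonempty with hempty | ⟨y, hyR, hyp⟩
  · rw [hempty, measure_empty]
    exact ENNReal.mul_pos hε' (measure_inter_ball_pos_of_mem_closure μ hU hp.1 hr).ne'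
  · obtain ⟨z, hzK, hzB⟩ :=
      exists_ball_subset_thickening_inter_ball hd (fun h => hp.2 (hdU h)) (hδV hyR).2 hyp
    calc μ (thickening δ C ∩ ball p r)
        ≤ μ V := measure_mono (inter_subset_left.trans (hδV.trans inter_subset_left))
      _ < ENNReal.ofReal ε * m := hVμ
      _ ≤ ENNReal.ofReal ε * μ (U ∩ ball p r) := by
        gcongr
        exact (hmμ z hzK).trans (measure_mono (hzB.trans (inter_subset_inter_left _ hdU)))

theorem stmt12 {n : ℕ} (μ : Measure (EuclideanSpace ℝ (Fin n)))
    (hac : μ ≪ volume)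
    (hpos : ∀ O : Set (EuclideanSpace ℝ (Fin n)), IsOpen O → O.Nonempty → 0 < μ O)
    (hfin : ∀ K : Set (EuclideanSpace ℝ (Fin n)), IsCompact K → μ K < ⊤)
    (U : Set (EuclideanSpace ℝ (Fin n))) (hU : IsOpen U) (hUconn : IsConnected U)
    (hbd : (frontier U).Nonempty)
    (C : Set (EuclideanSpace ℝ (Fin n))) (hC : IsCompact C) (hCconn : IsConnected C)
    (hCU : C ⊆ U) (hC0 : μ C = 0) (ε : ℝ) (hε : 0 < ε) :
    ∃ R : Set (EuclideanSpace ℝ (Fin n)), IsOpen R ∧ IsConnected R ∧ C ⊆ R ∧ R ⊆ U ∧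
      ∀ p ∈ frontier U, ∀ r > (0 : ℝ),
        μ (R ∩ ball p r) < ENNReal.ofReal ε * μ (U ∩ ball p r) :=
  stmt12_general μ hpos hfin U hU C hC hCconn hCU hC0 ε hε
end
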